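/- arXiv:2011.08443 — 2 statements merged into one kernel-verified Lean document; each statement's English description precedes it below -/
import Mathlib

section
/- For every bounded linear operator A on a complex Hilbert space and every v ∈ [0,1], ω(A) ≤ (1/4)( ‖A‖^{2(1-v)} + ‖A‖^{2v} + sqrt( (‖A‖^{2(1-v)} − ‖A‖^{2v})^2 + 4 ‖ |A|^{1-v} |A*|^{v} ‖^2 ) ). -/
variable {H : Type*} [NormedAddCommGroup H] [InnerProductSpace ℂ H] [CompleteSpace H]

/-- The numerical radius of a bounded linear operator. -/
noncomputable def numRadius (A : H →L[ℂ] H) : ℝ :=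
  ⨆ x : {x : H // ‖x‖ = 1}, ‖(inner ℂ (A x) (x : H) : ℂ)‖

/-- The absolute value |A| = (A*A)^(1/2). -/
noncomputable def absOp (A : H →L[ℂ] H) : H →L[ℂ] H :=
  CFC.sqrt (ContinuousLinearMap.adjoint A * A)

/-- Real powers of an operator via continuous functional calculus. -/
noncomputable def opRpow (T : H →L[ℂ] H) (r : ℝ) : H →L[ℂ] H :=
  cfc (fun t : ℝ => t ^ r) T

/-!
Write `P = |A|^(1-v)` and `Q = |A*|^v`. The mixed Schwarz inequality
`|⟪A x, y⟫| ≤ ‖P x‖ ‖Q y‖` is proved without a polar decomposition. Polynomial approximation turns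
`A (A*A)ⁿ = (AA*)ⁿ A` into `A φ(|A|) = φ(|A*|) A` for continuous `φ`, so
`⟪A |A| (|A| + ε)⁻¹ x, y⟫ = ⟪P x, A* |A*|^v (|A*| + ε)⁻¹ y⟫`, and `‖A* w‖ = ‖|A*| w‖` bounds this
by `‖P x‖ ‖Q y‖`; the remainder `A ε (|A| + ε)⁻¹` has norm at most `ε`.

For a unit vector `x`, `|⟪A x, x⟫| ≤ m / 2` with `m = ‖P x‖² + ‖Q x‖² = ⟪u, x⟫`, `u = P² x + Q² x`.
Expanding `‖u‖²` and using `‖P‖² ≤ a = ‖A‖^(2(1-v))`, `‖Q‖² ≤ b = ‖A‖^(2v)` bounds it by the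
quadratic form of `[[a, ‖PQ‖], [‖PQ‖, b]]` at `(‖P x‖, ‖Q x‖)`, hence by `λ m` with `λ` its
largest eigenvalue; with `m ≤ ‖u‖` this gives `m ≤ λ`, and `λ / 2` is the stated bound.
-/

open Polynomial Filter Topology

theorem SemiconjBy.aeval {R A : Type*} [CommSemiring R] [Semiring A] [Algebra R A] {a x y : A}
    (h : SemiconjBy a x y) (p : R[X]) : SemiconjBy a (aeval x p) (aeval y p) := by
  simp only [SemiconjBy, aeval_eq_sum_range, Finset.mul_sum, Finset.sum_mul, mul_smul_comm,
    smul_mul_assoc, (h.pow_right _).eq]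

theorem exists_seq_polynomial_tendstoUniformlyOn (a b : ℝ) {f : ℝ → ℝ}
    (hf : ContinuousOn f (Set.Icc a b)) :
    ∃ p : ℕ → ℝ[X], TendstoUniformlyOn (fun n t => (p n).eval t) f atTop (Set.Icc a b) := by
  choose p hp using fun n : ℕ =>
    exists_polynomial_near_of_continuousOn a b f hf (1 / (n + 1)) Nat.one_div_pos_of_nat
  refine ⟨p, Metric.tendstoUniformlyOn_iff.mpr fun ε hε => ?_⟩
  obtain ⟨N, hN⟩ := exists_nat_one_div_lt hε
  filter_upwards [eventually_ge_atTop N] with n hn t ht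
  rw [Real.dist_eq, abs_sub_comm]
  refine (hp n t ht).trans_le (le_trans ?_ hN.le)
  gcongr

section ContinuousFunctionalCalculus

variable {A : Type*} [Ring A] [StarRing A] [Algebra ℝ A] [TopologicalSpace A]
  [ContinuousFunctionalCalculus ℝ A IsSelfAdjoint] [IsTopologicalRing A] [T2Space A]

theorem SemiconjBy.cfc_real {a x y : A} (h : SemiconjBy a x y) (hx : IsSelfAdjoint x)
    (hy : IsSelfAdjoint y) {f : ℝ → ℝ} (hf : Continuous f) :
    SemiconjBy a (cfc f x) (cfc f y) := by
  obtain ⟨R, hR⟩ := ((ContinuousFunctionalCalculus.isCompact_spectrum (R := ℝ) x).union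
    (ContinuousFunctionalCalculus.isCompact_spectrum (R := ℝ) y)).isBounded.subset_closedBall 0
  rw [Real.closedBall_eq_Icc, zero_sub, zero_add] at hR
  obtain ⟨p, hp⟩ := exists_seq_polynomial_tendstoUniformlyOn (-R) R hf.continuousOn
  have hlim_x := tendsto_cfc_fun (hp.mono (Set.subset_union_left.trans hR))
    (.of_forall fun n => (p n).continuousOn) (a := x)
  have hlim_y := tendsto_cfc_fun (hp.mono (Set.subset_union_right.trans hR))
    (.of_forall fun n => (p n).continuousOn) (a := y)
  refine tendsto_nhds_unique (hlim_x.const_mul a) ((hlim_y.mul_const a).congr fun n => ?_)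
  rw [cfc_polynomial (p n) x, cfc_polynomial (p n) y]
  exact (h.aeval (p n)).eq.symm

end ContinuousFunctionalCalculus

section CStarAlgebra

variable {A : Type*} [CStarAlgebra A] [PartialOrder A] [StarOrderedRing A]

theorem CFC.abs_eq_cfc_sqrt (a : A) : CFC.abs a = cfc Real.sqrt (star a * a) := by
  rw [CFC.abs, CFC.sqrt_eq_real_sqrt _ (star_mul_self_nonneg a), cfcₙ_eq_cfc]

theorem CFC.spectrum_abs_subset_Ici (a : A) : spectrum ℝ (CFC.abs a) ⊆ Set.Ici 0 :=
  fun _ ht => spectrum_nonneg_of_nonneg (CFC.abs_nonneg a) ht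

theorem mul_cfc_abs (a : A) {f : ℝ → ℝ} (hf : ContinuousOn f (Set.Ici 0)) :
    a * cfc f (CFC.abs a) = cfc f (CFC.abs (star a)) * a := by
  have hf_sqrt (s : Set ℝ) : ContinuousOn f (Real.sqrt '' s) :=
    hf.mono (by rintro _ ⟨t, -, rfl⟩; exact Real.sqrt_nonneg t)
  rw [CFC.abs_eq_cfc_sqrt, CFC.abs_eq_cfc_sqrt, star_star,
    ← cfc_comp f Real.sqrt _ (.star_mul_self a) (hf_sqrt _),
    ← cfc_comp f Real.sqrt _ (.mul_star_self a) (hf_sqrt _)]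
  exact SemiconjBy.cfc_real (mul_assoc a (star a) a).symm (.star_mul_self a) (.mul_star_self a)
    (hf.comp_continuous Real.continuous_sqrt Real.sqrt_nonneg)

theorem norm_cfc_rpow_abs_le (a : A) {r : ℝ} (hr : 0 ≤ r) :
    ‖cfc (fun t : ℝ => t ^ r) (CFC.abs a)‖ ≤ ‖a‖ ^ r := by
  refine norm_cfc_le (by positivity) fun t ht => ?_
  have ht₀ : 0 ≤ t := CFC.spectrum_abs_subset_Ici a ht
  have ht₁ : t ≤ ‖a‖ := by
    simpa [abs_of_nonneg ht₀, CFC.norm_abs] using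
      IsometricContinuousFunctionalCalculus.norm_spectrum_le (CFC.abs a) ht
  rw [Real.norm_eq_abs, abs_of_nonneg (by positivity)]
  exact Real.rpow_le_rpow ht₀ ht₁ hr

end CStarAlgebra

/-- The factor `(a + b + √((a - b)² + 4c²)) / 2` is the largest eigenvalue of `[[a, c], [c, b]]`. -/
theorem mul_sq_add_two_mul_add_mul_sq_le (a b c s t : ℝ) :
    a * s ^ 2 + 2 * c * s * t + b * t ^ 2
      ≤ (a + b + √((a - b) ^ 2 + 4 * c ^ 2)) / 2 * (s ^ 2 + t ^ 2) := by
  set D := √((a - b) ^ 2 + 4 * c ^ 2)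
  have hD₀ : 0 ≤ D := Real.sqrt_nonneg _
  have hD : D ^ 2 = (a - b) ^ 2 + 4 * c ^ 2 := Real.sq_sqrt (by positivity)
  obtain ⟨h₁, h₂⟩ := abs_le.mp (Real.abs_le_sqrt (by nlinarith) : |a - b| ≤ D)
  suffices 0 ≤ (D - (a - b)) * s ^ 2 + (D + (a - b)) * t ^ 2 - 4 * c * s * t by linarith
  rcases hD₀.eq_or_lt with hD0 | hD0
  · have hc : c = 0 := by nlinarith
    simp [← hD0, hc, show a - b = 0 by linarith]
  · have key : 2 * D * ((D - (a - b)) * s ^ 2 + (D + (a - b)) * t ^ 2 - 4 * c * s * t)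
        = ((D - (a - b)) * s - 2 * c * t) ^ 2 + ((D + (a - b)) * t - 2 * c * s) ^ 2 := by
      linear_combination (s ^ 2 + t ^ 2) * hD
    nlinarith [sq_nonneg ((D - (a - b)) * s - 2 * c * t),
      sq_nonneg ((D + (a - b)) * t - 2 * c * s)]

theorem absOp_eq_abs (T : H →L[ℂ] H) : absOp T = CFC.abs T := by
  rw [absOp, CFC.abs, ContinuousLinearMap.star_eq_adjoint]

namespace ContinuousLinearMap

theorem norm_abs_apply (T : H →L[ℂ] H) (x : H) : ‖CFC.abs T x‖ = ‖T x‖ := by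
  have hB : IsSelfAdjoint (CFC.abs T) := .of_nonneg (CFC.abs_nonneg T)
  rw [← sq_eq_sq₀ (norm_nonneg _) (norm_nonneg _), apply_norm_sq_eq_inner_adjoint_left,
    apply_norm_sq_eq_inner_adjoint_left, ← star_eq_adjoint, ← star_eq_adjoint, hB.star_eq]
  exact congrArg (fun S : H →L[ℂ] H => RCLike.re (inner ℂ (S x) x)) (CFC.abs_mul_abs T)

theorem norm_apply_cfc_regularized_le (T : H →L[ℂ] H) {ε : ℝ} (hε : 0 < ε) (x : H) :
    ‖T (cfc (fun t => ε / (t + ε)) (CFC.abs T) x)‖ ≤ ε * ‖x‖ := by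
  have hc : ContinuousOn (fun t : ℝ => ε / (t + ε)) (Set.Ici 0) :=
    continuousOn_const.div (by fun_prop) fun t (ht : 0 ≤ t) => by positivity
  have hB : CFC.abs T * cfc (fun t => ε / (t + ε)) (CFC.abs T)
      = cfc (fun t => t * (ε / (t + ε))) (CFC.abs T) := by
    rw [cfc_mul (fun t => t) _ _ continuousOn_id (hc.mono (CFC.spectrum_abs_subset_Ici T)),
      cfc_id' ..]
  rw [← norm_abs_apply, ← mul_apply_eq_comp, hB]
  refine le_of_opNorm_le _ (norm_cfc_le hε.le fun t ht => ?_) x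
  have ht₀ : 0 ≤ t := CFC.spectrum_abs_subset_Ici T ht
  rw [Real.norm_eq_abs, abs_of_nonneg (by positivity), mul_div_assoc',
    div_le_iff₀ (by positivity)]
  nlinarith

theorem norm_inner_apply_cfc_regularized_le (T : H →L[ℂ] H) {v ε : ℝ} (hv₀ : 0 ≤ v)
    (hv₁ : v ≤ 1) (hε : 0 < ε) (x y : H) :
    ‖inner ℂ (T (cfc (fun t => t / (t + ε)) (CFC.abs T) x)) y‖
      ≤ ‖cfc (fun t : ℝ => t ^ (1 - v)) (CFC.abs T) x‖
        * ‖cfc (fun t : ℝ => t ^ v) (CFC.abs (star T)) y‖ := by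
  set B := CFC.abs T
  set C := CFC.abs (star T)
  set P := cfc (fun t : ℝ => t ^ (1 - v)) B
  set Q := cfc (fun t : ℝ => t ^ v) C
  set h := fun t : ℝ => t ^ v / (t + ε)
  have hpow {r : ℝ} (hr : 0 ≤ r) : Continuous (· ^ r : ℝ → ℝ) := Real.continuous_rpow_const hr
  have hdiv {g : ℝ → ℝ} (hg : Continuous g) :
      ContinuousOn (fun t => g t / (t + ε)) (Set.Ici 0) :=
    hg.continuousOn.div (by fun_prop) fun t (ht : 0 ≤ t) => by positivity
  have hsplit : cfc (fun t => t / (t + ε)) B = cfc h B * P := by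
    rw [← cfc_mul _ _ _ ((hdiv (hpow hv₀)).mono (CFC.spectrum_abs_subset_Ici T))
      (hpow (by linarith)).continuousOn]
    refine cfc_congr fun t ht => ?_
    have ht₀ : 0 ≤ t := CFC.spectrum_abs_subset_Ici T ht
    rw [div_mul_eq_mul_div, ← Real.rpow_add' ht₀ (by norm_num), add_sub_cancel, Real.rpow_one]
  have hC : C * cfc h C = cfc (fun t => t / (t + ε)) C * Q := calc
    C * cfc h C = cfc (fun t => t * h t) C := by
      rw [cfc_mul (fun t => t) h C continuousOn_id
        ((hdiv (hpow hv₀)).mono (CFC.spectrum_abs_subset_Ici _)), cfc_id' ..]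
    _ = cfc (fun t => t / (t + ε) * t ^ v) C := cfc_congr fun t _ => by simp only [h]; ring
    _ = cfc (fun t => t / (t + ε)) C * Q :=
      cfc_mul _ _ _ ((hdiv continuous_id).mono (CFC.spectrum_abs_subset_Ici _))
        (hpow hv₀).continuousOn
  have hTx : T (cfc (fun t => t / (t + ε)) B x) = cfc h C (T (P x)) := by
    rw [hsplit]
    exact congr($(mul_cfc_abs T (hdiv (hpow hv₀))) (P x))
  have hcontr : ‖cfc (fun t => t / (t + ε)) C‖ ≤ 1 := by
    refine norm_cfc_le zero_le_one fun t ht => ?_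
    have ht₀ : 0 ≤ t := CFC.spectrum_abs_subset_Ici _ ht
    rw [Real.norm_eq_abs, abs_of_nonneg (by positivity), div_le_one (by positivity)]
    linarith
  calc ‖inner ℂ (T (cfc (fun t => t / (t + ε)) B x)) y‖
      = ‖inner ℂ (P x) (adjoint T (cfc h C y))‖ := by
        rw [hTx, ← adjoint_inner_right, (cfc_predicate h C : IsSelfAdjoint _).adjoint_eq,
          ← adjoint_inner_right]
    _ ≤ ‖P x‖ * ‖adjoint T (cfc h C y)‖ := norm_inner_le_norm _ _
    _ = ‖P x‖ * ‖(C * cfc h C) y‖ := by rw [← star_eq_adjoint, ← norm_abs_apply (star T)]; rfl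
    _ = ‖P x‖ * ‖cfc (fun t => t / (t + ε)) C (Q y)‖ := by rw [hC]; rfl
    _ ≤ ‖P x‖ * ‖Q y‖ := by
        gcongr
        simpa using le_of_opNorm_le _ hcontr (Q y)

theorem norm_inner_apply_le_mixed_schwarz (T : H →L[ℂ] H) {v : ℝ} (hv₀ : 0 ≤ v) (hv₁ : v ≤ 1)
    (x y : H) :
    ‖inner ℂ (T x) y‖
      ≤ ‖cfc (fun t : ℝ => t ^ (1 - v)) (CFC.abs T) x‖
        * ‖cfc (fun t : ℝ => t ^ v) (CFC.abs (star T)) y‖ := by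
  set B := CFC.abs T
  set M := ‖cfc (fun t : ℝ => t ^ (1 - v)) B x‖ * ‖cfc (fun t : ℝ => t ^ v) (CFC.abs (star T)) y‖
  have approx (ε : ℝ) (hε : 0 < ε) : ‖inner ℂ (T x) y‖ ≤ M + ε * (‖x‖ * ‖y‖) := by
    have hc {g : ℝ → ℝ} (hg : Continuous g) :
        ContinuousOn (fun t => g t / (t + ε)) (spectrum ℝ B) :=
      hg.continuousOn.div (by fun_prop) fun t ht =>
        (add_pos_of_nonneg_of_pos (CFC.spectrum_abs_subset_Ici T ht) hε).ne'
    have hone : cfc (fun t => t / (t + ε)) B + cfc (fun t => ε / (t + ε)) B = 1 := by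
      rw [← cfc_add B (fun t => t / (t + ε)) (fun t => ε / (t + ε)) (hc continuous_id)
        (hc continuous_const), ← cfc_const_one ℝ B]
      refine cfc_congr fun t ht => ?_
      have : t + ε ≠ 0 := (add_pos_of_nonneg_of_pos (CFC.spectrum_abs_subset_Ici T ht) hε).ne'
      field_simp
    have hx : x = cfc (fun t => t / (t + ε)) B x + cfc (fun t => ε / (t + ε)) B x := by
      rw [← add_apply, hone]; rfl
    calc ‖inner ℂ (T x) y‖
        = ‖inner ℂ (T (cfc (fun t => t / (t + ε)) B x)) y
            + inner ℂ (T (cfc (fun t => ε / (t + ε)) B x)) y‖ := by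
          conv_lhs => rw [hx]
          rw [map_add, inner_add_left]
      _ ≤ ‖inner ℂ (T (cfc (fun t => t / (t + ε)) B x)) y‖
            + ‖inner ℂ (T (cfc (fun t => ε / (t + ε)) B x)) y‖ := norm_add_le _ _
      _ ≤ M + ε * (‖x‖ * ‖y‖) := by
          gcongr
          · exact norm_inner_apply_cfc_regularized_le T hv₀ hv₁ hε x y
          · rw [← mul_assoc]
            exact (norm_inner_le_norm _ _).trans
              (by gcongr; exact norm_apply_cfc_regularized_le T hε x)
  have hlim : Tendsto (fun ε => M + ε * (‖x‖ * ‖y‖)) (𝓝[>] 0) (𝓝 M) := by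
    have : Continuous (fun ε : ℝ => M + ε * (‖x‖ * ‖y‖)) := by fun_prop
    simpa using this.continuousWithinAt (s := Set.Ioi 0) (x := 0) |>.tendsto
  exact ge_of_tendsto hlim (eventually_nhdsWithin_of_forall approx)

theorem norm_sq_add_norm_sq_le {P Q : H →L[ℂ] H} (hP : IsSelfAdjoint P) (hQ : IsSelfAdjoint Q)
    {α β : ℝ} (hα : ‖P‖ ≤ α) (hβ : ‖Q‖ ≤ β) (x : H) :
    ‖P x‖ ^ 2 + ‖Q x‖ ^ 2
      ≤ (α ^ 2 + β ^ 2 + √((α ^ 2 - β ^ 2) ^ 2 + 4 * ‖P * Q‖ ^ 2)) / 2 * ‖x‖ ^ 2 := by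
  set s := ‖P x‖
  set t := ‖Q x‖
  set γ := ‖P * Q‖
  set c := (α ^ 2 + β ^ 2 + √((α ^ 2 - β ^ 2) ^ 2 + 4 * γ ^ 2)) / 2
  set u := P (P x) + Q (Q x)
  have hm : s ^ 2 + t ^ 2 ≤ ‖x‖ * ‖u‖ := calc
    s ^ 2 + t ^ 2 = RCLike.re (inner ℂ x u) := by
      rw [apply_norm_sq_eq_inner_adjoint_right, apply_norm_sq_eq_inner_adjoint_right,
        hP.adjoint_eq, hQ.adjoint_eq, inner_add_right, map_add]
      rfl
    _ ≤ ‖x‖ * ‖u‖ := (RCLike.re_le_norm _).trans (norm_inner_le_norm _ _)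
  have hPP : ‖P (P x)‖ ≤ α * s := P.le_of_opNorm_le hα _
  have hQQ : ‖Q (Q x)‖ ≤ β * t := Q.le_of_opNorm_le hβ _
  have hcross : RCLike.re (inner ℂ (P (P x)) (Q (Q x))) ≤ γ * s * t := calc
    RCLike.re (inner ℂ (P (P x)) (Q (Q x))) = RCLike.re (inner ℂ (P x) ((P * Q) (Q x))) := by
      rw [mul_apply_eq_comp, ← adjoint_inner_left P (Q (Q x)) (P x), hP.adjoint_eq]
    _ ≤ s * ‖(P * Q) (Q x)‖ := (RCLike.re_le_norm _).trans (norm_inner_le_norm _ _)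
    _ ≤ s * (γ * t) := by gcongr; exact le_opNorm _ _
    _ = γ * s * t := by ring
  have hu : ‖u‖ ^ 2 ≤ c * (s ^ 2 + t ^ 2) := calc
    ‖u‖ ^ 2 = ‖P (P x)‖ ^ 2 + 2 * RCLike.re (inner ℂ (P (P x)) (Q (Q x))) + ‖Q (Q x)‖ ^ 2 :=
      norm_add_sq (𝕜 := ℂ) _ _
    _ ≤ α ^ 2 * s ^ 2 + 2 * γ * s * t + β ^ 2 * t ^ 2 := by
      nlinarith [norm_nonneg (P (P x)), norm_nonneg (Q (Q x))]
    _ ≤ c * (s ^ 2 + t ^ 2) := mul_sq_add_two_mul_add_mul_sq_le _ _ _ _ _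
  have key : (s ^ 2 + t ^ 2) * (s ^ 2 + t ^ 2) ≤ c * ‖x‖ ^ 2 * (s ^ 2 + t ^ 2) := calc
    (s ^ 2 + t ^ 2) * (s ^ 2 + t ^ 2) ≤ (‖x‖ * ‖u‖) * (‖x‖ * ‖u‖) :=
      mul_self_le_mul_self (by positivity) hm
    _ = ‖x‖ ^ 2 * ‖u‖ ^ 2 := by ring
    _ ≤ ‖x‖ ^ 2 * (c * (s ^ 2 + t ^ 2)) := by gcongr
    _ = c * ‖x‖ ^ 2 * (s ^ 2 + t ^ 2) := by ring
  rcases (by positivity : 0 ≤ s ^ 2 + t ^ 2).eq_or_lt with h | h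
  · rw [← h]; positivity
  · exact le_of_mul_le_mul_right key h

end ContinuousLinearMap

theorem stmt2 (A : H →L[ℂ] H) (v : ℝ) (hv : v ∈ Set.Icc (0:ℝ) 1) :
    numRadius A ≤ (1/4) * (‖A‖ ^ (2*(1-v)) + ‖A‖ ^ (2*v) +
      Real.sqrt ((‖A‖ ^ (2*(1-v)) - ‖A‖ ^ (2*v))^2 +
        4 * ‖opRpow (absOp A) (1-v) * opRpow (absOp (ContinuousLinearMap.adjoint A)) v‖^2)) := by
  obtain ⟨hv₀, hv₁⟩ := hv
  set P := opRpow (absOp A) (1 - v) with hP_def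
  set Q := opRpow (absOp (ContinuousLinearMap.adjoint A)) v with hQ_def
  have hP : P = cfc (fun t : ℝ => t ^ (1 - v)) (CFC.abs A) := by rw [hP_def, absOp_eq_abs]; rfl
  have hQ : Q = cfc (fun t : ℝ => t ^ v) (CFC.abs (star A)) := by
    rw [hQ_def, absOp_eq_abs, ContinuousLinearMap.star_eq_adjoint]; rfl
  have hPn : ‖P‖ ≤ ‖A‖ ^ (1 - v) := hP ▸ norm_cfc_rpow_abs_le A (by linarith)
  have hQn : ‖Q‖ ≤ ‖A‖ ^ v := hQ ▸ norm_star A ▸ norm_cfc_rpow_abs_le (star A) hv₀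
  have hsq (r : ℝ) : ‖A‖ ^ (2 * r) = (‖A‖ ^ r) ^ 2 := by
    rw [mul_comm, Real.rpow_mul (norm_nonneg A), Real.rpow_two]
  rw [hsq, hsq]
  refine Real.iSup_le (fun ⟨x, hx⟩ => ?_) (by positivity)
  have hsum := ContinuousLinearMap.norm_sq_add_norm_sq_le
    (hP ▸ cfc_predicate _ _) (hQ ▸ cfc_predicate _ _) hPn hQn x
  rw [hx, one_pow, mul_one] at hsum
  calc ‖inner ℂ (A x) x‖ ≤ ‖P x‖ * ‖Q x‖ :=
        hP ▸ hQ ▸ ContinuousLinearMap.norm_inner_apply_le_mixed_schwarz A hv₀ hv₁ x x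
    _ ≤ (‖P x‖ ^ 2 + ‖Q x‖ ^ 2) / 2 := by nlinarith [sq_nonneg (‖P x‖ - ‖Q x‖)]
    _ ≤ _ := by linarith
end

section
/- For every bounded linear operator A on a complex Hilbert space and every unit vector x, and for v ∈ [0,1], |⟨Ax,x⟩| ≤ sqrt( ⟨|A|^{2(1-v)}x, x⟩ ⟨|A*|^{2v}x, x⟩ ). -/
variable {H : Type*} [NormedAddCommGroup H] [InnerProductSpace ℂ H] [CompleteSpace H]

/-! Polar decomposition: since `‖|A| z‖ = ‖A z‖`, the map `|A| z ↦ A z` extends to a partial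
isometry `U` with `A = U |A|` and `U* U |A| = |A|`. Then `U |A| U*` is a positive square root of
`A A*`, so it equals `|A*|`, and more generally `U |A|ⁿ⁺¹ U* = |A*|ⁿ⁺¹`; by Weierstrass
approximation `U f(|A|) U* = f(|A*|)` for every continuous `f` with `f 0 = 0`, in particular for
`t ↦ t ^ (2v)` when `v > 0`. Writing `|A| = |A|ᵛ |A|¹⁻ᵛ`, Cauchy–Schwarz gives
`|⟨A x, x⟩| = |⟨|A|ᵛ U* x, |A|¹⁻ᵛ x⟩| ≤ ‖|A|ᵛ U* x‖ ‖|A|¹⁻ᵛ x‖`, and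
`‖|A|ᵛ U* x‖² = ⟨U |A|²ᵛ U* x, x⟩ = ⟨|A*|²ᵛ x, x⟩`. -/

open Polynomial Filter Topology ContinuousLinearMap

theorem exists_seq_tendstoUniformlyOn_polynomial_eval {f : ℝ → ℝ} {R : ℝ}
    (hf : ContinuousOn f (Metric.closedBall 0 R)) :
    ∃ p : ℕ → ℝ[X],
      TendstoUniformlyOn (fun n t => (p n).eval t) f atTop (Metric.closedBall 0 R) := by
  rw [Real.closedBall_zero_eq_Icc] at hf ⊢
  choose p hp using fun n : ℕ =>
    exists_polynomial_near_of_continuousOn (-R) R f hf (1 / (n + 1)) Nat.one_div_pos_of_nat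
  refine ⟨p, Metric.tendstoUniformlyOn_iff.mpr fun ε hε => ?_⟩
  obtain ⟨N, hN⟩ := exists_nat_one_div_lt hε
  filter_upwards [eventually_ge_atTop N] with n hn t ht
  rw [Real.dist_eq, abs_sub_comm]
  calc |(p n).eval t - f t| < 1 / (n + 1) := hp n t ht
    _ ≤ 1 / (N + 1) := by gcongr
    _ < ε := hN

section Conjugation

variable {R : Type*}

theorem mul_pow_succ_mul_eq_pow_succ [Monoid R] {u v b : R} (h : v * u * b = b) (n : ℕ) :
    u * b ^ (n + 1) * v = (u * b * v) ^ (n + 1) := by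
  induction n with
  | zero => simp
  | succ n ih =>
    calc u * b ^ (n + 1 + 1) * v = u * b ^ (n + 1) * (v * u * b) * v := by
          rw [h, pow_succ b (n + 1)]; simp only [mul_assoc]
      _ = (u * b ^ (n + 1) * v) * (u * b * v) := by simp only [mul_assoc]
      _ = (u * b * v) ^ (n + 1 + 1) := by rw [ih, ← pow_succ]

theorem mul_aeval_mul_eq [Ring R] [Algebra ℝ R] {u w b c : R}
    (h : ∀ n : ℕ, u * b ^ (n + 1) * w = c ^ (n + 1)) (p : ℝ[X]) :
    u * aeval b p * w = aeval c p + p.eval 0 • (u * w - 1) := by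
  induction p using Polynomial.induction_on' with
  | add p q hp hq =>
    simp only [map_add, mul_add, add_mul, hp, hq, eval_add, add_smul]
    abel
  | monomial n a =>
    rcases n with _ | n
    · simp [Algebra.algebraMap_eq_smul_one, smul_sub]
    · simp [Algebra.algebraMap_eq_smul_one, h n]

theorem mul_cfc_mul_eq_cfc [CStarAlgebra R] {u w b c : R} (hb : IsSelfAdjoint b)
    (hc : IsSelfAdjoint c) (h : ∀ n : ℕ, u * b ^ (n + 1) * w = c ^ (n + 1)) {f : ℝ → ℝ}
    (hf : Continuous f) (hf0 : f 0 = 0) : u * cfc f b * w = cfc f c := by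
  obtain ⟨r, hr0, hr⟩ :=
    ((spectrum.isBounded (𝕜 := ℝ) b).union (spectrum.isBounded c)).subset_closedBall_lt 0 0
  obtain ⟨p, hp⟩ := exists_seq_tendstoUniformlyOn_polynomial_eval (R := r) hf.continuousOn
  have hpoly : ∀ n, Continuous fun t => (p n).eval t := fun n => (p n).continuous
  have lim_b : Tendsto (fun n => u * cfc (fun t => (p n).eval t) b * w) atTop
      (𝓝 (u * cfc f b * w)) :=
    ((tendsto_cfc_fun (hp.mono (by grind)) (.of_forall fun n => (hpoly n).continuousOn)).const_mul
      u).mul_const w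
  have lim_c : Tendsto (fun n => cfc (fun t => (p n).eval t) c) atTop (𝓝 (cfc f c)) :=
    tendsto_cfc_fun (hp.mono (by grind)) (.of_forall fun n => (hpoly n).continuousOn)
  have lim_0 : Tendsto (fun n => (p n).eval 0) atTop (𝓝 0) := by
    simpa only [hf0] using hp.tendsto_at (Metric.mem_closedBall_self hr0.le)
  have lim_b' : Tendsto (fun n => u * cfc (fun t => (p n).eval t) b * w) atTop (𝓝 (cfc f c)) := by
    simp only [cfc_polynomial _ b hb, mul_aeval_mul_eq h, ← cfc_polynomial _ c hc]
    simpa using lim_c.add (lim_0.smul_const (u * w - 1))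
  exact tendsto_nhds_unique lim_b lim_b'

theorem mul_mul_star_eq_sqrt [CStarAlgebra R] [PartialOrder R] [StarOrderedRing R] {u b : R}
    (hb : 0 ≤ b) (h : star u * u * b = b) :
    u * b * star u = CFC.sqrt (u * b * star (u * b)) := by
  refine (CFC.sqrt_unique ?_ (star_right_conjugate_nonneg hb u)).symm
  calc u * b * star u * (u * b * star u) = u * b * (star u * u * b) * star u := by
        simp only [mul_assoc]
    _ = u * b * star (u * b) := by rw [h, star_mul, hb.isSelfAdjoint.star_eq, mul_assoc]

end Conjugation

theorem exists_partialIsometry_mul_eq_of_norm_apply_eq {A B : H →L[ℂ] H}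
    (h : ∀ z, ‖B z‖ = ‖A z‖) :
    ∃ U : H →L[ℂ] H, U * B = A ∧ adjoint U * U * B = B := by
  set S := (LinearMap.range (B : H →ₗ[ℂ] H)).topologicalClosure
  have hBS : ∀ z, B z ∈ S := fun z =>
    (LinearMap.range (B : H →ₗ[ℂ] H)).le_topologicalClosure ⟨z, rfl⟩
  let e : H →ₗ[ℂ] S := (B : H →ₗ[ℂ] H).codRestrict S hBS
  have he : DenseRange e := by
    rw [DenseRange, Subtype.dense_iff, ← Set.range_comp]
    exact (LinearMap.range (B : H →ₗ[ℂ] H)).topologicalClosure_coe.subset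
  have hAe : ∃ C, ∀ z, ‖A z‖ ≤ C * ‖e z‖ := ⟨1, fun z => by simp [e, h]⟩
  let V : S →L[ℂ] H := (A : H →ₗ[ℂ] H).extendOfNorm e
  have hVe : ∀ z, V (e z) = A z := LinearMap.extendOfNorm_eq he hAe
  have hV : ∀ s, ‖V s‖ = ‖s‖ := fun s =>
    he.induction_on s (isClosed_eq (by fun_prop) (by fun_prop)) fun z => by
      rw [hVe, ← h]; rfl
  have hVinner : ∀ s t, inner ℂ (V s) (V t) = inner ℂ s t :=
    (⟨V.toLinearMap, hV⟩ : S →ₗᵢ[ℂ] H).inner_map_map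
  have hPB : ∀ z, S.orthogonalProjectionOnto (B z) = e z := fun z =>
    S.orthogonalProjectionOnto_mem_subspace_eq_self (e z)
  refine ⟨V ∘L S.orthogonalProjectionOnto, ?_, ?_⟩
  · ext z
    simp [hPB, hVe]
  · ext z
    refine ext_inner_left ℂ fun w => ?_
    rw [mul_apply_eq_comp, mul_apply_eq_comp, adjoint_inner_right, comp_apply, comp_apply, hPB,
      hVinner]
    exact S.inner_orthogonalProjectionOnto_eq_of_mem_right _ _

theorem absOp_nonneg (A : H →L[ℂ] H) : 0 ≤ absOp A := CFC.sqrt_nonneg _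

theorem norm_absOp_apply (A : H →L[ℂ] H) (z : H) : ‖absOp A z‖ = ‖A z‖ := by
  have hsq : absOp A * absOp A = adjoint A * A :=
    CFC.sqrt_mul_sqrt_self _ (star_mul_self_nonneg A)
  rw [← sq_eq_sq₀ (norm_nonneg _) (norm_nonneg _), apply_norm_sq_eq_inner_adjoint_left,
    apply_norm_sq_eq_inner_adjoint_left, (absOp_nonneg A).isSelfAdjoint.adjoint_eq]
  exact congrArg (fun T : H →L[ℂ] H => RCLike.re (inner ℂ (T z) z)) hsq

theorem exists_mul_absOp_eq (A : H →L[ℂ] H) : ∃ U : H →L[ℂ] H, U * absOp A = A ∧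
    ∀ n : ℕ, U * absOp A ^ (n + 1) * adjoint U = absOp (adjoint A) ^ (n + 1) := by
  obtain ⟨U, hUA, hUU⟩ := exists_partialIsometry_mul_eq_of_norm_apply_eq (norm_absOp_apply A)
  refine ⟨U, hUA, fun n => ?_⟩
  rw [mul_pow_succ_mul_eq_pow_succ hUU, ← star_eq_adjoint,
    mul_mul_star_eq_sqrt (absOp_nonneg A) hUU, hUA, absOp, adjoint_adjoint]
  rfl

theorem isSelfAdjoint_opRpow (T : H →L[ℂ] H) (r : ℝ) : IsSelfAdjoint (opRpow T r) :=
  cfc_predicate _ _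

theorem opRpow_add {T : H →L[ℂ] H} (hT : 0 ≤ T) {a b : ℝ} (ha : 0 ≤ a) (hb : 0 ≤ b) :
    opRpow T (a + b) = opRpow T a * opRpow T b := by
  rw [opRpow, opRpow, opRpow, ← cfc_mul _ _ T (Real.continuous_rpow_const ha).continuousOn
    (Real.continuous_rpow_const hb).continuousOn]
  exact cfc_congr fun t ht =>
    Real.rpow_add_of_nonneg (spectrum_nonneg_of_nonneg hT ht) ha hb

theorem opRpow_one {T : H →L[ℂ] H} (hT : 0 ≤ T) : opRpow T 1 = T := by
  rw [opRpow, cfc_congr fun t _ => Real.rpow_one t]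
  exact cfc_id' ℝ T

theorem norm_opRpow_apply_sq {T : H →L[ℂ] H} (hT : 0 ≤ T) {s : ℝ} (hs : 0 ≤ s) (z : H) :
    ‖opRpow T s z‖ ^ 2 = (inner ℂ (opRpow T (2 * s) z) z : ℂ).re := by
  rw [apply_norm_sq_eq_inner_adjoint_left, (isSelfAdjoint_opRpow T s).adjoint_eq, two_mul,
    opRpow_add hT hs hs]
  rfl

theorem norm_inner_apply_self_le_of_pos (A : H →L[ℂ] H) (x : H) {v : ℝ} (hv0 : 0 < v)
    (hv1 : v ≤ 1) :
    ‖(inner ℂ (A x) x : ℂ)‖ ≤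
      ‖opRpow (absOp A) (1 - v) x‖ * ‖opRpow (absOp (adjoint A)) v x‖ := by
  obtain ⟨U, hUA, hpow⟩ := exists_mul_absOp_eq A
  have hB := absOp_nonneg A
  have hC := absOp_nonneg (adjoint A)
  have hconj : U * opRpow (absOp A) (2 * v) * adjoint U = opRpow (absOp (adjoint A)) (2 * v) :=
    mul_cfc_mul_eq_cfc hB.isSelfAdjoint hC.isSelfAdjoint hpow
      (Real.continuous_rpow_const (by positivity)) (Real.zero_rpow (by positivity))
  have hnorm : ‖opRpow (absOp A) v (adjoint U x)‖ = ‖opRpow (absOp (adjoint A)) v x‖ := by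
    rw [← sq_eq_sq₀ (norm_nonneg _) (norm_nonneg _), norm_opRpow_apply_sq hB hv0.le,
      norm_opRpow_apply_sq hC hv0.le, ← hconj, mul_apply_eq_comp, mul_apply_eq_comp,
      adjoint_inner_right]
  have hA : A = U * (opRpow (absOp A) v * opRpow (absOp A) (1 - v)) := by
    rw [← opRpow_add hB hv0.le (sub_nonneg.2 hv1), add_sub_cancel, opRpow_one hB, hUA]
  have hinner : (inner ℂ x (A x) : ℂ) =
      inner ℂ (opRpow (absOp A) v (adjoint U x)) (opRpow (absOp A) (1 - v) x) := by
    conv_lhs => rw [hA]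
    rw [mul_apply_eq_comp, mul_apply_eq_comp, ← adjoint_inner_left,
      ← adjoint_inner_left (opRpow _ v), (isSelfAdjoint_opRpow _ v).adjoint_eq]
  calc ‖(inner ℂ (A x) x : ℂ)‖ = ‖(inner ℂ x (A x) : ℂ)‖ := norm_inner_symm _ _
    _ ≤ ‖opRpow (absOp A) v (adjoint U x)‖ * ‖opRpow (absOp A) (1 - v) x‖ :=
      hinner ▸ norm_inner_le_norm _ _
    _ = _ := by rw [hnorm, mul_comm]

theorem stmt19_general (A : H →L[ℂ] H) (x : H) (v : ℝ) (hv : v ∈ Set.Icc (0:ℝ) 1) :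
    ‖(inner ℂ (A x) x : ℂ)‖ ≤ Real.sqrt
      ((inner ℂ (opRpow (absOp A) (2*(1-v)) x) x : ℂ).re *
       (inner ℂ (opRpow (absOp (ContinuousLinearMap.adjoint A)) (2*v) x) x : ℂ).re) := by
  obtain ⟨hv0, hv1⟩ := hv
  rw [← norm_opRpow_apply_sq (absOp_nonneg A) (sub_nonneg.2 hv1),
    ← norm_opRpow_apply_sq (absOp_nonneg _) hv0, ← mul_pow, Real.sqrt_sq (by positivity)]
  rcases hv0.eq_or_lt with rfl | hv0
  -- `t ^ 0` does not vanish at `0`, so the case `v = 0` is the case `v = 1` for the adjoint.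
  · rw [sub_zero]
    have h := norm_inner_apply_self_le_of_pos (adjoint A) x one_pos le_rfl
    rwa [adjoint_inner_left, norm_inner_symm, adjoint_adjoint, sub_self, mul_comm] at h
  · exact norm_inner_apply_self_le_of_pos A x hv0 hv1

theorem stmt19 (A : H →L[ℂ] H) (x : H) (hx : ‖x‖ = 1) (v : ℝ) (hv : v ∈ Set.Icc (0:ℝ) 1) :
    ‖(inner ℂ (A x) x : ℂ)‖ ≤ Real.sqrt
      ((inner ℂ (opRpow (absOp A) (2*(1-v)) x) x : ℂ).re *
       (inner ℂ (opRpow (absOp (ContinuousLinearMap.adjoint A)) (2*v) x) x : ℂ).re) :=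
  stmt19_general A x v hv
end
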